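/- Uniform solutions of the Lennard-Jones chain exist up to the applied load 2.76: with a₀ the unique global minimizer over (0,∞) of r ↦ φ(r) + φ(2r), one has φ'(a₀) + 2φ'(2a₀) = 0 and φ'(11/10) + 2φ'(11/5) > 2.76; consequently, for every t ∈ [0, 2.76] there exists r ∈ [a₀, 11/10] with φ'(r) + 2φ'(2r) = t. -/

import Mathlib

open Set

/-!
The force `r ↦ φ'(r) + 2φ'(2r)` is the derivative of the chain energy `E(r) = φ(r) + φ(2r)`,
so it vanishes at the minimizer `a₀`. Writing `φ(r) = (r⁻⁶ - 1)² - 1` shows that `φ`, hence `E`,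
is monotone on `[1, ∞)`; as `E(11/10) > E(1)`, the minimizer lies below `11/10`. The force is
continuous on `(0, ∞)`, and the intermediate value theorem on `[a₀, 11/10]` gives every load
between `0` and the numerically checked value at `11/10`.
-/

noncomputable def LJ : ℝ → ℝ := fun r => r ^ (-12 : ℤ) - 2 * r ^ (-6 : ℤ)

noncomputable def ljChainEnergy (r : ℝ) : ℝ := LJ r + LJ (2 * r)

noncomputable def ljChainForce (r : ℝ) : ℝ := deriv LJ r + 2 * deriv LJ (2 * r)

theorem hasDerivAt_LJ {r : ℝ} (hr : r ≠ 0) :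
    HasDerivAt LJ (-12 * r ^ (-13 : ℤ) + 12 * r ^ (-7 : ℤ)) r := by
  have h := (hasDerivAt_zpow (-12) r (Or.inl hr)).sub
    ((hasDerivAt_zpow (-6) r (Or.inl hr)).const_mul 2)
  exact h.congr_deriv (by push_cast; ring)

theorem deriv_LJ {r : ℝ} (hr : r ≠ 0) :
    deriv LJ r = -12 * r ^ (-13 : ℤ) + 12 * r ^ (-7 : ℤ) :=
  (hasDerivAt_LJ hr).deriv

theorem continuousAt_deriv_LJ {r : ℝ} (hr : r ≠ 0) : ContinuousAt (deriv LJ) r := by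
  have hformula : ContinuousAt (fun s : ℝ => -12 * s ^ (-13 : ℤ) + 12 * s ^ (-7 : ℤ)) r :=
    ((continuousAt_zpow₀ r (-13) (Or.inl hr)).const_mul _).add
      ((continuousAt_zpow₀ r (-7) (Or.inl hr)).const_mul _)
  refine hformula.congr ?_
  filter_upwards [eventually_ne_nhds hr] with s hs
  exact (deriv_LJ hs).symm

theorem LJ_eq_sq_sub_one (r : ℝ) : LJ r = (r ^ (-6 : ℤ) - 1) ^ 2 - 1 := by
  have h : r ^ (-12 : ℤ) = (r ^ (-6 : ℤ)) ^ 2 := by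
    rw [← zpow_natCast, ← zpow_mul]; norm_num
  rw [LJ, h]
  ring

theorem monotoneOn_LJ : MonotoneOn LJ (Ici 1) := by
  intro x (hx : 1 ≤ x) y _ hxy
  have hx₀ : 0 < x := one_pos.trans_le hx
  have hyx : y ^ (-6 : ℤ) ≤ x ^ (-6 : ℤ) := by
    rw [zpow_neg, zpow_neg]
    exact inv_anti₀ (by positivity) (zpow_le_zpow_left₀ (by norm_num) hx₀.le hxy)
  have hx₁ : x ^ (-6 : ℤ) ≤ 1 := zpow_le_one_of_nonpos₀ hx (by norm_num)
  rw [LJ_eq_sq_sub_one, LJ_eq_sq_sub_one]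
  nlinarith

theorem monotoneOn_ljChainEnergy : MonotoneOn ljChainEnergy (Ici 1) := by
  intro x (hx : 1 ≤ x) y (hy : 1 ≤ y) hxy
  exact add_le_add (monotoneOn_LJ hx hy hxy)
    (monotoneOn_LJ (by linarith : (1 : ℝ) ≤ 2 * x) (by linarith : (1 : ℝ) ≤ 2 * y) (by linarith))

theorem hasDerivAt_ljChainEnergy {r : ℝ} (hr : r ≠ 0) :
    HasDerivAt ljChainEnergy (ljChainForce r) r := by
  have hdouble : HasDerivAt (fun s : ℝ => 2 * s) 2 r := by
    simpa using (hasDerivAt_id r).const_mul (2 : ℝ)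
  have h := (hasDerivAt_LJ hr).add
    ((hasDerivAt_LJ (mul_ne_zero two_ne_zero hr)).comp r hdouble)
  rw [ljChainForce, deriv_LJ hr, deriv_LJ (mul_ne_zero two_ne_zero hr)]
  exact h.congr_deriv (by ring)

theorem continuousAt_ljChainForce {r : ℝ} (hr : r ≠ 0) : ContinuousAt ljChainForce r :=
  (continuousAt_deriv_LJ hr).add <| ((continuousAt_deriv_LJ (mul_ne_zero two_ne_zero hr)).comp
    (continuousAt_id.const_mul 2)).const_mul 2

theorem le_of_isMinOn_ljChainEnergy {a₀ : ℝ} (hmin : IsMinOn ljChainEnergy (Ioi 0) a₀) :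
    a₀ ≤ 11 / 10 := by
  by_contra! h
  have hnum : ljChainEnergy 1 < ljChainEnergy (11 / 10) := by
    norm_num [ljChainEnergy, LJ]
  have hmono : ljChainEnergy (11 / 10) ≤ ljChainEnergy a₀ :=
    monotoneOn_ljChainEnergy (by norm_num : (1 : ℝ) ≤ 11 / 10) (by linarith : 1 ≤ a₀) h.le
  have hmin₁ : ljChainEnergy a₀ ≤ ljChainEnergy 1 := hmin (by norm_num : (0 : ℝ) < 1)
  linarith

/-- Uniform solutions of the Lennard-Jones chain exist up to the applied load `2.76`:
with `a₀` the global minimizer of `r ↦ φ(r) + φ(2r)` over `(0,∞)`, one has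
`φ'(a₀) + 2φ'(2a₀) = 0` and `φ'(11/10) + 2φ'(11/5) > 2.76`, and consequently every
load `t ∈ [0, 2.76]` is attained at some `r ∈ [a₀, 11/10]`. -/
theorem stmt_11 (a₀ : ℝ) (ha₀ : 0 < a₀)
    (hmin : ∀ r : ℝ, 0 < r → LJ a₀ + LJ (2 * a₀) ≤ LJ r + LJ (2 * r)) :
    deriv LJ a₀ + 2 * deriv LJ (2 * a₀) = 0 ∧
    2.76 < deriv LJ (11 / 10) + 2 * deriv LJ (11 / 5) ∧
    (∀ t : ℝ, 0 ≤ t → t ≤ 2.76 →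
      ∃ r : ℝ, a₀ ≤ r ∧ r ≤ 11 / 10 ∧ deriv LJ r + 2 * deriv LJ (2 * r) = t) := by
  have hminOn : IsMinOn ljChainEnergy (Ioi 0) a₀ := fun r hr => hmin r hr
  have hcrit : ljChainForce a₀ = 0 :=
    (hminOn.isLocalMin (Ioi_mem_nhds ha₀)).hasDerivAt_eq_zero (hasDerivAt_ljChainEnergy ha₀.ne')
  have hload : 2.76 < deriv LJ (11 / 10) + 2 * deriv LJ (11 / 5) := by
    rw [deriv_LJ (by norm_num), deriv_LJ (by norm_num)]
    norm_num
  have hend : ljChainForce (11 / 10) = deriv LJ (11 / 10) + 2 * deriv LJ (11 / 5) := by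
    norm_num [ljChainForce]
  refine ⟨hcrit, hload, fun t ht₀ ht₁ => ?_⟩
  have hcont : ContinuousOn ljChainForce (Icc a₀ (11 / 10)) := fun r hr =>
    (continuousAt_ljChainForce (ha₀.trans_le hr.1).ne').continuousWithinAt
  obtain ⟨r, hr, hrt⟩ := intermediate_value_Icc (le_of_isMinOn_ljChainEnergy hminOn) hcont
    (⟨hcrit.le.trans ht₀, by linarith⟩ : t ∈ Icc (ljChainForce a₀) (ljChainForce (11 / 10)))
  exact ⟨r, hr.1, hr.2, hrt⟩
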